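/- arXiv:2210.15792 — 4 statements merged into one kernel-verified Lean document; each statement's English description precedes it below -/
import Mathlib

section
/- Let V be a finite set, Q : V → V → ℤ symmetric, K : V → ℤ, E ⊆ V and v ∈ E. Define K+2v* : V → ℤ by (K+2v*)(w) = K(w) + 2Q(v,w). Then B_v(K,E) := min { f(K,I) : v ∈ I ⊆ E } satisfies B_v(K,E) = f(K,{v}) + g(K+2v*, E∖{v}), where f(K,I) = (Σ_{w∈I} K(w) + Q(1_I,1_I))/2 and g(K',E') = min_{I⊆E'} f(K',I). In particular B_v(K,E) = (K(v)+Q(v,v))/2 + g(K+2v*, E∖{v}). -/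
/-!
Every `I` with `v ∈ I ⊆ E` is `insert v J` for a unique `J ⊆ E ∖ {v}`, and expanding the
quadratic term along this splitting gives, by symmetry of `Q`,
`f(K, insert v J) = f(K, {v}) + f(K + 2v*, J)`: the cross terms `2 Q(v, 1_J)` are absorbed into
the shifted characteristic vector. Minimising over `J` then pulls the constant `f(K, {v})` out.
-/

open Finset

namespace Finset

variable {α β : Type*}

lemma filter_mem_powerset_eq_image_insert [DecidableEq α] {s : Finset α} {a : α} (ha : a ∈ s) :
    s.powerset.filter (a ∈ ·) = (s.erase a).powerset.image (insert a) := by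
  ext t
  simp only [mem_filter, mem_powerset, mem_image, subset_erase]
  constructor
  · rintro ⟨hts, hat⟩
    exact ⟨t.erase a, ⟨(erase_subset a t).trans hts, notMem_erase a t⟩, insert_erase hat⟩
  · rintro ⟨u, ⟨hus, -⟩, rfl⟩
    exact ⟨insert_subset ha hus, mem_insert_self a u⟩

lemma inf'_filter_mem_powerset [DecidableEq α] [SemilatticeInf β] {s : Finset α} {a : α}
    (ha : a ∈ s) (H : (s.powerset.filter (a ∈ ·)).Nonempty) (φ : Finset α → β) :
    (s.powerset.filter (a ∈ ·)).inf' H φ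
      = (s.erase a).powerset.inf' (powerset_nonempty _) (fun t => φ (insert a t)) := by
  rw [inf'_congr H (filter_mem_powerset_eq_image_insert ha) fun _ _ => rfl, inf'_image]
  rfl

lemma inf'_const_add [LinearOrder β] [Add β] [AddLeftMono β] {s : Finset α} (H : s.Nonempty)
    (c : β) (φ : α → β) : s.inf' H (fun x => c + φ x) = c + s.inf' H φ :=
  (apply_inf'_eq_inf'_comp H (c + ·) fun x y => (min_add_add_left c x y).symm).symm

end Finset

section Energy

variable {V R : Type*} [CommSemiring R]

/-- Twice the paper's `f(K, I)`. -/
def doubledEnergy (Q : V → V → R) (K : V → R) (I : Finset V) : R :=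
  ∑ w ∈ I, K w + ∑ w ∈ I, ∑ u ∈ I, Q w u

lemma doubledEnergy_singleton (Q : V → V → R) (K : V → R) (v : V) :
    doubledEnergy Q K {v} = K v + Q v v := by
  simp [doubledEnergy]

lemma doubledEnergy_insert [DecidableEq V] {Q : V → V → R} (hQ : ∀ v w, Q v w = Q w v)
    (K : V → R) {v : V} {I : Finset V} (hv : v ∉ I) :
    doubledEnergy Q K (insert v I)
      = doubledEnergy Q K {v} + doubledEnergy Q (fun w => K w + 2 * Q v w) I := by
  have hrow : ∀ w ∈ I, ∑ u ∈ insert v I, Q w u = Q v w + ∑ u ∈ I, Q w u := fun w _ => by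
    rw [sum_insert hv, hQ w v]
  rw [doubledEnergy_singleton, doubledEnergy, doubledEnergy, sum_insert hv, sum_insert hv,
    sum_insert hv, sum_congr rfl hrow, sum_add_distrib, sum_add_distrib, ← mul_sum]
  ring

end Energy

/-- `B_v(K,E) = f(K,{v}) + g(K + 2v^*, E∖{v})`, where `(K+2v^*)(w) = K(w) + 2Q(v,w)`,
`f(K,I) = (∑_{w∈I} K w + Q(1_I,1_I))/2` and `g(K',E') = min_{I⊆E'} f(K',I)`.
In particular `B_v(K,E) = (K(v)+Q(v,v))/2 + g(K+2v^*, E∖{v})`. -/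
theorem stmt_5 (V : Type*) [DecidableEq V]
    (Q : V → V → ℤ) (hsym : ∀ v w, Q v w = Q w v)
    (K : V → ℤ) (E : Finset V) (v : V) (hv : v ∈ E) :
    let f : (V → ℤ) → Finset V → ℚ := fun K' I =>
      (((∑ w ∈ I, K' w : ℤ) : ℚ) + ((∑ w ∈ I, ∑ u ∈ I, Q w u : ℤ) : ℚ)) / 2
    let K2 : V → ℤ := fun w => K w + 2 * Q v w
    (E.powerset.filter (fun I => v ∈ I)).inf'
        ⟨E, Finset.mem_filter.mpr ⟨Finset.mem_powerset_self E, hv⟩⟩ (f K)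
      = f K {v}
        + (E.erase v).powerset.inf' ⟨∅, Finset.empty_mem_powerset _⟩ (f K2)
      ∧ f K {v} = ((K v + Q v v : ℤ) : ℚ) / 2 := by
  intro f K2
  have hf : ∀ K' I, f K' I = ((doubledEnergy Q K' I : ℤ) : ℚ) / 2 := fun K' I => by
    simp only [f, doubledEnergy, Int.cast_add]
  have hsplit : ∀ I ∈ (E.erase v).powerset, f K (insert v I) = f K {v} + f K2 I := by
    intro I hI
    have hvI : v ∉ I := fun h => notMem_erase v E (mem_powerset.mp hI h)
    rw [hf, hf, hf, doubledEnergy_insert hsym K hvI]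
    push_cast
    ring
  refine ⟨?_, by rw [hf, doubledEnergy_singleton]⟩
  refine (inf'_filter_mem_powerset hv _ (f K)).trans ?_
  rw [inf'_congr _ rfl hsplit, inf'_const_add]
end

section
/- Let V be a finite set, Q : V → V → ℤ symmetric, K : V → ℤ, and E ⊆ V. Define the conjugate vector J_E(K) : V → ℤ by J_E(K)(w) = −K(w) − 2Σ_{v∈E} Q(v,w). Then g(K,E) − g(J_E(K), E) = f(K,E), where f(K,I) = (Σ_{w∈I} K(w) + Q(1_I,1_I))/2 and g(K,E) = min_{I⊆E} f(K,I). -/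
private lemma inf'_sub_const {α : Type*} (s : Finset α) (hs : s.Nonempty)
    (u : α → ℚ) (c : ℚ) :
    s.inf' hs (fun i => u i - c) = s.inf' hs u - c := by
  apply le_antisymm
  · obtain ⟨i, hi, h⟩ := s.exists_mem_eq_inf' hs u
    calc s.inf' hs (fun i => u i - c) ≤ u i - c := Finset.inf'_le _ hi
      _ = s.inf' hs u - c := by rw [h]
  · exact Finset.le_inf' _ _ fun i hi => by
      have := Finset.inf'_le u hi
      linarith

/-- Conjugation symmetry of lattice homology:
`g(K,E) − g(−K − ∑_{v∈E} 2v^*, E) = f(K,E)`, where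
`f(K,I) = (∑_{w∈I} K w + Q(1_I,1_I))/2` and `g(K,E) = min_{I⊆E} f(K,I)`. -/
theorem stmt_6 (V : Type*) [DecidableEq V]
    (Q : V → V → ℤ) (hsym : ∀ v w, Q v w = Q w v)
    (K : V → ℤ) (E : Finset V) :
    let f : (V → ℤ) → Finset V → ℚ := fun K' I =>
      (((∑ w ∈ I, K' w : ℤ) : ℚ) + ((∑ w ∈ I, ∑ u ∈ I, Q w u : ℤ) : ℚ)) / 2
    let g : (V → ℤ) → ℚ := fun K' =>
      E.powerset.inf' ⟨∅, Finset.empty_mem_powerset E⟩ (f K')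
    let JK : V → ℤ := fun w => -K w - 2 * ∑ v ∈ E, Q v w
    g K - g JK = f K E := by
  intro f g JK
  have hne : E.powerset.Nonempty := ⟨∅, Finset.empty_mem_powerset E⟩
  -- key identity: f(JK, I) = f(K, E\I) - f(K, E) for I ⊆ E
  have key : ∀ I ∈ E.powerset, f JK I = f K (E \ I) - f K E := by
    intro I hI
    rw [Finset.mem_powerset] at hI
    have hz : (∑ w ∈ I, JK w) + (∑ w ∈ I, ∑ u ∈ I, Q w u)
        = ((∑ w ∈ E \ I, K w) + (∑ w ∈ E \ I, ∑ u ∈ E \ I, Q w u))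
          - ((∑ w ∈ E, K w) + (∑ w ∈ E, ∑ u ∈ E, Q w u)) := by
      have hK : (∑ w ∈ E \ I, K w) + ∑ w ∈ I, K w = ∑ w ∈ E, K w :=
        Finset.sum_sdiff hI
      have hJ : (∑ w ∈ I, JK w)
          = -(∑ w ∈ I, K w) - 2 * ∑ w ∈ I, ∑ v ∈ E, Q v w := by
        simp [JK, Finset.sum_add_distrib, Finset.sum_sub_distrib, Finset.mul_sum]
      have hflip : (∑ w ∈ I, ∑ v ∈ E, Q v w) = ∑ w ∈ I, ∑ v ∈ E, Q w v := by
        refine Finset.sum_congr rfl fun w _ => Finset.sum_congr rfl fun v _ => hsym v w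
      have hsplit : ∀ X : Finset V,
          (∑ w ∈ X, ∑ u ∈ E, Q w u)
            = (∑ w ∈ X, ∑ u ∈ E \ I, Q w u) + ∑ w ∈ X, ∑ u ∈ I, Q w u := by
        intro X
        rw [← Finset.sum_add_distrib]
        exact Finset.sum_congr rfl fun w _ => (Finset.sum_sdiff hI).symm
      have d1 : (∑ w ∈ E \ I, ∑ u ∈ E, Q w u) + ∑ w ∈ I, ∑ u ∈ E, Q w u
          = ∑ w ∈ E, ∑ u ∈ E, Q w u := Finset.sum_sdiff hI
      have dsymm : (∑ w ∈ I, ∑ u ∈ E \ I, Q w u)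
          = ∑ w ∈ E \ I, ∑ u ∈ I, Q w u := by
        rw [Finset.sum_comm]
        exact Finset.sum_congr rfl fun w _ => Finset.sum_congr rfl fun u _ => hsym u w
      have h2 := hsplit (E \ I)
      have h3 := hsplit I
      rw [hJ, hflip]
      linarith
    simp only [f, ← sub_div]
    congr 1
    push_cast
    exact_mod_cast hz
  have h1 : g JK = E.powerset.inf' hne (fun I => f K (E \ I) - f K E) :=
    Finset.inf'_congr hne rfl key
  have h2 : E.powerset.inf' hne (fun I => f K (E \ I)) = g K := by
    apply le_antisymm
    · refine Finset.le_inf' _ _ fun I hI => ?_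
      have hmem : E \ I ∈ E.powerset := Finset.mem_powerset.2 (Finset.sdiff_subset)
      have := Finset.inf'_le (fun I => f K (E \ I)) hmem
      rwa [Finset.sdiff_sdiff_eq_self (Finset.mem_powerset.1 hI)] at this
    · refine Finset.le_inf' _ _ fun I hI => ?_
      exact Finset.inf'_le _ (Finset.mem_powerset.2 Finset.sdiff_subset)
  rw [show g K - g JK = f K E ↔ g JK = g K - f K E by constructor <;> intro h <;> linarith,
    h1, inf'_sub_const, h2]
end

section
/- Let n ≥ 1 and let p, q be integers with 1 ≤ p < q ≤ n. Suppose I : {1,…,n} → ℕ satisfies I_i ≤ q − p for all i and Σ_{i=1}^n I_i = (p+q−1)(q−p)/2. For k ∈ ℕ set a_k = #{ i : I_i ≥ k }. Then a_1 + a_2 ≥ q − 1. -/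
/-- Combinatorial lemma for relations in `HFL(T(n,n))`: if `I : {1,…,n} → ℕ` satisfies
`I_i ≤ q − p` for all `i` and `∑ I_i = (p+q−1)(q−p)/2`, and `a_k = #{i : I_i ≥ k}`,
then `a_1 + a_2 ≥ q − 1`. -/
theorem stmt_8 (n p q : ℕ) (hp : 1 ≤ p) (hpq : p < q) (hqn : q ≤ n)
    (I : Fin n → ℕ) (hI : ∀ i, I i ≤ q - p)
    (hsum : ∑ i, I i = (p + q - 1) * (q - p) / 2) :
    q - 1 ≤ (Finset.univ.filter (fun i => 1 ≤ I i)).card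
      + (Finset.univ.filter (fun i => 2 ≤ I i)).card := by
  obtain ⟨p0, rfl⟩ : ∃ p0, p = p0 + 1 := ⟨p - 1, by omega⟩
  obtain ⟨s0, hq⟩ : ∃ s0, q = p0 + s0 + 2 := ⟨q - p0 - 2, by omega⟩
  set A := (Finset.univ.filter (fun i => 1 ≤ I i)).card with hA
  set B := (Finset.univ.filter (fun i => 2 ≤ I i)).card with hB
  by_contra hcon
  push_neg at hcon
  have hcon' : A + B ≤ p0 + s0 := by omega
  have hIq : ∀ i, I i ≤ s0 + 1 := fun i => by have := hI i; omega
  have hAS : A ≤ ∑ i, I i := by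
    rw [hA, Finset.card_filter]
    exact Finset.sum_le_sum fun i _ => by split <;> omega
  have hBA : B ≤ A := by
    refine Finset.card_le_card ?_
    intro i hi
    simp only [Finset.mem_filter, Finset.mem_univ, true_and] at hi ⊢
    omega
  have hSB : ∑ i, I i ≤ A + s0 * B := by
    calc ∑ i, I i
        ≤ ∑ i, ((if 1 ≤ I i then 1 else 0) + (if 2 ≤ I i then s0 else 0)) :=
          Finset.sum_le_sum fun i _ => by
            have := hIq i; split <;> split <;> omega
      _ = A + s0 * B := by
          rw [Finset.sum_add_distrib, hA, hB, Finset.card_filter]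
          congr 1
          rw [← Finset.sum_filter, Finset.sum_const, smul_eq_mul, mul_comm]
  have hdvd : 2 ∣ (p0 + 1 + q - 1) * (q - (p0 + 1)) := by
    rcases (by omega : 2 ∣ (p0 + 1 + q - 1) ∨ 2 ∣ (q - (p0 + 1))) with h | h
    exacts [h.mul_right _, h.mul_left _]
  have h2S : 2 * ∑ i, I i = (p0 + 1 + q - 1) * (q - (p0 + 1)) := by
    rw [hsum]; exact Nat.mul_div_cancel' hdvd
  have e1 : p0 + 1 + q - 1 = 2 * p0 + s0 + 2 := by omega
  have e2 : q - (p0 + 1) = s0 + 1 := by omega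
  rw [e1, e2] at h2S
  have hint : s0 * (2 * B) ≤ s0 * (p0 + s0) :=
    Nat.mul_le_mul_left _ (by omega)
  nlinarith [hSB, h2S, hcon', hint, hAS]
end

section
/- Let 𝔽 = ℤ/2, R = 𝔽[U,V], and let D be the complex with R-basis a, b, c and ∂a = Vb, ∂c = Ub, ∂b = 0. Let Z = R·e ⊕ 𝔽·f (with zero differential), and define 𝔽-linear maps: i : Z → D by i(U^nV^m e) = U^nV^m(Ua + Vc) and i(f) = b; π : D → Z by π(U^nV^m a) = U^{n−1}V^m e if n > 0 and 0 if n = 0, π(b) = f, π(U^nV^m b) = 0 for (n,m) ≠ (0,0), π(R·c) = 0; h : D → D by h(a) = h(c) = 0, h(U^nV^m b) = U^{n−1}V^m c if n > 0, h(V^m b) = V^{m−1} a if m > 0, h(b) = 0. Then the A∞-operation induced by homological perturbation satisfies m_3(U, V, f) = π(U · h(V · i(f))) = e. -/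
open MvPolynomial

/-- `R = 𝔽₂[U,V]`. -/
noncomputable abbrev R15 : Type := MvPolynomial (Fin 2) (ZMod 2)

noncomputable def U15 : R15 := X 0
noncomputable def V15 : R15 := X 1

/-- The complex `D` with `R`-basis `a, b, c` (`∂a = Vb`, `∂c = Ub`, `∂b = 0`),
encoded as `R·a × R·b × R·c`. -/
abbrev D15 : Type := R15 × R15 × R15

/-- `Z = R·e ⊕ 𝔽·f`. -/
abbrev Z15 : Type := R15 × ZMod 2

/-- The `A∞`-operation obtained from the homological perturbation lemma applied to
the contraction `(i, π, h)` of `D` onto `Z = H_*(D)` satisfies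
`m₃(U, V, f) = π(U · h(V · i(f))) = e`.  The maps `i, π, h` are the explicit 𝔽-linear
maps of Section 2.4: `i(UⁿVᵐ e) = UⁿVᵐ(Ua + Vc)`, `i(f) = b`;
`π(UⁿVᵐ a) = Uⁿ⁻¹Vᵐ e` for `n > 0` and `0` for `n = 0`, `π(b) = f`,
`π(UⁿVᵐ b) = 0` for `(n,m) ≠ (0,0)`, `π ≡ 0` on `R·c`;
`h(a) = h(c) = 0`, `h(UⁿVᵐ b) = Uⁿ⁻¹Vᵐ c` if `n > 0`, `h(Vᵐ b) = Vᵐ⁻¹ a` if `m > 0`,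
`h(b) = 0`. -/
theorem stmt_15
    (i : Z15 →ₗ[ZMod 2] D15) (π : D15 →ₗ[ZMod 2] Z15) (h : D15 →ₗ[ZMod 2] D15)
    (hi : ∀ n m : ℕ, i (U15 ^ n * V15 ^ m, 0)
      = (U15 ^ (n + 1) * V15 ^ m, 0, U15 ^ n * V15 ^ (m + 1)))
    (hif : i (0, 1) = (0, 1, 0))
    (hπa : ∀ n m : ℕ, π (U15 ^ (n + 1) * V15 ^ m, 0, 0) = (U15 ^ n * V15 ^ m, 0))
    (hπa0 : ∀ m : ℕ, π (V15 ^ m, 0, 0) = 0)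
    (hπb0 : π (0, 1, 0) = (0, 1))
    (hπb : ∀ n m : ℕ, (n, m) ≠ (0, 0) → π (0, U15 ^ n * V15 ^ m, 0) = 0)
    (hπc : ∀ r : R15, π (0, 0, r) = 0)
    (hha : h (1, 0, 0) = 0) (hhc : h (0, 0, 1) = 0)
    (hhbU : ∀ n m : ℕ, h (0, U15 ^ (n + 1) * V15 ^ m, 0) = (0, 0, U15 ^ n * V15 ^ m))
    (hhbV : ∀ m : ℕ, h (0, V15 ^ (m + 1), 0) = (V15 ^ m, 0, 0))
    (hhb0 : h (0, 1, 0) = 0) :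
    π (U15 • h (V15 • i ((0 : R15), (1 : ZMod 2)))) = ((1 : R15), (0 : ZMod 2)) := by
  rw [hif]
  have h1 : V15 • ((0 : R15), (1 : R15), (0 : R15)) = ((0:R15), V15 ^ 1, (0:R15)) := by
    simp [Prod.smul_def, smul_eq_mul]
  rw [h1, hhbV 0]
  have h2 : U15 • ((V15 ^ 0 : R15), (0:R15), (0:R15)) = (U15 ^ 1 * V15 ^ 0, (0:R15), (0:R15)) := by
    simp [Prod.smul_def, smul_eq_mul]
  rw [h2, hπa 0 0]
  simp
end
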